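/- Let N ≥ 2 be an integer and ζ = exp(2πi/N). For all integers n ≥ 0 and 0 ≤ k ≤ n, the complex number S_{n,k} = Σ_{l=1}^{N−1} ζ^{lk}/(ζ^l − 1)^n is real, i.e. its imaginary part vanishes. -/

import Mathlib

open Real Finset

/-- `S_{n,k} = ∑_{l=1}^{N-1} ζ^{lk}/(ζ^l - 1)^n`, where `ζ = exp(2πi/N)`. -/
noncomputable def S (N n k : ℕ) : ℂ :=
  ∑ l ∈ Finset.Ico 1 N,
    (Complex.exp (2 * π * Complex.I / N)) ^ (l * k) /
      ((Complex.exp (2 * π * Complex.I / N)) ^ l - 1) ^ n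

/-! Complex conjugation sends `ζ^l` to `ζ^{-l} = ζ^{N-l}`, so it maps the term of index `l` of
`S_{n,k}` to the term of index `N - l`; as `l ↦ N - l` permutes `{1, …, N-1}`, the sum is fixed by
conjugation. -/

theorem pow_sub_eq_inv_pow_of_pow_eq_one {M : Type*} [DivisionMonoid M] {z : M} {N l : ℕ}
    (hzN : z ^ N = 1) (hl : l ≤ N) : z ^ (N - l) = (z ^ l)⁻¹ :=
  eq_inv_of_mul_eq_one_left (by rw [← pow_add, Nat.sub_add_cancel hl, hzN])

section Reflection

variable {K : Type*} [Field K] [StarRing K] {z : K} {N : ℕ}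

theorem star_pow_mul_div_pow_sub_one (hzN : z ^ N = 1) (hz : star z = z⁻¹) (n k : ℕ) {l : ℕ}
    (hl : l ≤ N) :
    star (z ^ (l * k) / (z ^ l - 1) ^ n) = z ^ ((N - l) * k) / (z ^ (N - l) - 1) ^ n := by
  rw [← starRingEnd_apply, map_div₀, map_pow, map_pow, map_sub, map_one, map_pow,
    starRingEnd_apply, hz, pow_mul, pow_mul, pow_sub_eq_inv_pow_of_pow_eq_one hzN hl, inv_pow,
    inv_pow]

theorem star_sum_Ico_pow_mul_div_pow_sub_one (hzN : z ^ N = 1) (hz : star z = z⁻¹) (n k : ℕ) :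
    star (∑ l ∈ Ico 1 N, z ^ (l * k) / (z ^ l - 1) ^ n) =
      ∑ l ∈ Ico 1 N, z ^ (l * k) / (z ^ l - 1) ^ n := by
  calc star (∑ l ∈ Ico 1 N, z ^ (l * k) / (z ^ l - 1) ^ n)
      = ∑ l ∈ Ico 1 N, z ^ ((N - l) * k) / (z ^ (N - l) - 1) ^ n := by
        rw [star_sum]
        refine sum_congr rfl fun l hl => ?_
        exact star_pow_mul_div_pow_sub_one hzN hz n k (mem_Ico.mp hl).2.le
    _ = ∑ l ∈ Ico 1 N, z ^ (l * k) / (z ^ l - 1) ^ n := by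
        rw [sum_Ico_reflect (fun j => z ^ (j * k) / (z ^ j - 1) ^ n) 1 N.le_succ,
          Nat.add_sub_cancel, Nat.add_sub_cancel_left]

end Reflection

theorem exp_two_pi_I_div_pow_self (N : ℕ) : Complex.exp (2 * π * Complex.I / N) ^ N = 1 := by
  rcases eq_or_ne N 0 with rfl | hN
  · exact pow_zero _
  · exact (Complex.isPrimitiveRoot_exp N hN).pow_eq_one

theorem star_exp_two_pi_I_div (N : ℕ) :
    star (Complex.exp (2 * π * Complex.I / N)) = (Complex.exp (2 * π * Complex.I / N))⁻¹ := by
  rw [← Complex.exp_neg, ← starRingEnd_apply, ← Complex.exp_conj, map_div₀, map_mul,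
    Complex.conj_I, Complex.conj_natCast, map_mul, Complex.conj_ofReal, map_ofNat]
  ring_nf

theorem S_is_real (N : ℕ) (n k : ℕ) : (S N n k).im = 0 :=
  Complex.conj_eq_iff_im.mp <|
    star_sum_Ico_pow_mul_div_pow_sub_one (exp_two_pi_I_div_pow_self N) (star_exp_two_pi_I_div N) n k
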